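/- arXiv:2402.08340 — 2 statements merged into one kernel-verified Lean document; each statement's English description precedes it below -/
import Mathlib

section
/- Let a, r, s ∈ ℕ and let n ≥ a(a+1)(r+2ar+3s)/6 be an integer. There exists a polynomial 𝒫_{a,r,s,n} ∈ ℚ[x] of degree exactly n − a(a+1)(r+2ar+3s)/6 such that d_{a,k,r,s}(n) = 𝒫_{a,r,s,n}(k) for every k ∈ ℤ. -/
open PowerSeries Finset
open scoped Classical

noncomputable section

/-- `(1 - q^n)^(-k)` in `ℚ⟦q⟧`, for `k : ℤ` (for negative `k` this is the
power `(1 - q^n)^{|k|}`). -/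
def dFac (n : ℕ) (k : ℤ) : PowerSeries ℚ :=
  if 0 ≤ k then ((1 - (X : PowerSeries ℚ) ^ n)⁻¹) ^ k.toNat
  else (1 - (X : PowerSeries ℚ) ^ n) ^ (-k).toNat

/-- Strictly increasing `a`-tuples `1 ≤ n₁ < n₂ < ⋯ < n_a ≤ N`. -/
def strictTuples (a N : ℕ) : Finset (Fin a → ℕ) :=
  (Fintype.piFinset fun _ : Fin a => Finset.Icc 1 N).filter fun f => StrictMono f

/-- The coefficient `d_{a,k,r,s}(N)` of `q^N` in
`ℬ_{a,k,r,s}(q) = Σ_{1≤n₁<⋯<n_a} q^{r(n₁²+⋯+n_a²)+s(n₁+⋯+n_a)} / ∏_j (1-q^{n_j})^k`.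
Since `r, s ≥ 1`, tuples containing an entry `> N` contribute `0` to the coefficient of `q^N`,
so the (q-adically convergent) infinite sum can be truncated to entries in `[1, N]`. -/
def Bcoeff (a : ℕ) (k : ℤ) (r s : ℕ) (N : ℕ) : ℚ :=
  ∑ f ∈ strictTuples a N,
    PowerSeries.coeff (R := ℚ) N
      ((X : PowerSeries ℚ) ^ (r * (∑ j, (f j) ^ 2) + s * ∑ j, f j) * ∏ j, dFac (f j) k)

/-!
The coefficient of `q^(tu)` in `(1 - q^t)^(-k)` is `k(k+1)⋯(k+u-1)/u!` for every integer `k`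
(for `k < 0` this is the signed binomial coefficient of `(1 - q^t)^|k|`), a polynomial in `k` of
degree `u` with nonnegative coefficients. Expanding the product over a tuple `n₁ < ⋯ < n_a`,
`d_{a,k,r,s}(n)` is therefore a polynomial in `k`, to which a tuple of weight
`w = r Σ nⱼ² + s Σ nⱼ` contributes in degree at most `n - w`. The weight is smallest for
`(1, 2, …, a)`, where it equals `a(a+1)(r+2ar+3s)/6`. All coefficients being nonnegative, nothing
cancels in the top degree, where putting all of `q^(n-w)` on the factor `n₁ = 1` contributes
`1/(n-w)!`.
-/

open scoped Polynomial Nat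

def multichoosePoly (u : ℕ) : ℚ[X] := Polynomial.C ((u ! : ℚ)⁻¹) * ascPochhammer ℚ u

@[simp] lemma multichoosePoly_zero : multichoosePoly 0 = 1 := by simp [multichoosePoly]

lemma natDegree_multichoosePoly (u : ℕ) : (multichoosePoly u).natDegree = u := by
  rw [multichoosePoly, Polynomial.natDegree_C_mul (by positivity), ascPochhammer_natDegree]

lemma coeff_multichoosePoly_self (u : ℕ) : (multichoosePoly u).coeff u = (u ! : ℚ)⁻¹ := by
  have h := (monic_ascPochhammer ℚ u).coeff_natDegree
  rw [ascPochhammer_natDegree] at h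
  rw [multichoosePoly, Polynomial.coeff_C_mul, h, mul_one]

lemma multichoosePoly_mem_lifts (u : ℕ) : multichoosePoly u ∈ Polynomial.lifts NNRat.coeHom :=
  (Polynomial.mem_lifts _).2 ⟨Polynomial.C ((u ! : ℚ≥0)⁻¹) * ascPochhammer ℚ≥0 u, by
    simp [multichoosePoly, Polynomial.map_mul, ascPochhammer_map]⟩

lemma eval_natCast_multichoosePoly (m u : ℕ) :
    (multichoosePoly u).eval (m : ℚ) = ((m + u - 1).choose u : ℚ) := by
  rw [multichoosePoly, Polynomial.eval_mul, Polynomial.eval_C, ← ascPochhammer_eval_cast,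
    ascPochhammer_nat_eq_ascFactorial, Nat.ascFactorial_eq_factorial_mul_choose']
  push_cast
  rw [← mul_assoc, inv_mul_cancel₀ (by positivity), one_mul]

lemma eval_neg_natCast_multichoosePoly (m u : ℕ) :
    (multichoosePoly u).eval (-(m : ℚ)) = (-1) ^ u * (m.choose u : ℚ) := by
  rw [multichoosePoly, Polynomial.eval_mul, Polynomial.eval_C,
    ascPochhammer_eval_neg_eq_descPochhammer, descPochhammer_eval_eq_descFactorial,
    Nat.descFactorial_eq_factorial_mul_choose]
  push_cast
  field_simp

lemma coeff_inv_one_sub_X_pow (m u : ℕ) :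
    coeff u (((1 - X : ℚ⟦X⟧)⁻¹) ^ m) = ((m + u - 1).choose u : ℚ) := by
  have hinv : (1 - X : ℚ⟦X⟧)⁻¹ = PowerSeries.mk 1 :=
    (PowerSeries.inv_eq_iff_mul_eq_one (by simp)).2 (mk_one_mul_one_sub_eq_one ℚ)
  rcases m with _ | d
  · rcases u with _ | u <;> simp
  · rw [hinv, mk_one_pow_eq_mk_choose_add, coeff_mk, add_right_comm, Nat.add_sub_cancel,
      Nat.choose_symm_add]

lemma coeff_one_sub_X_pow (m u : ℕ) :
    coeff u ((1 - X : ℚ⟦X⟧) ^ m) = (-1) ^ u * (m.choose u : ℚ) := by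
  have hrescale : (1 - X : ℚ⟦X⟧) ^ m = rescale (-1) (((1 + Polynomial.X) ^ m : ℚ[X]) : ℚ⟦X⟧) := by
    simp [map_pow, rescale_X, sub_eq_add_neg]
  rw [hrescale, coeff_rescale, Polynomial.coeff_coe, Polynomial.coeff_one_add_X_pow]

lemma coeff_dFac_one (k : ℤ) (u : ℕ) : coeff u (dFac 1 k) = (multichoosePoly u).eval (k : ℚ) := by
  cases k with
  | ofNat m =>
    rw [Int.ofNat_eq_natCast, dFac, if_pos (Int.natCast_nonneg m), Int.toNat_natCast, pow_one,
      coeff_inv_one_sub_X_pow, Int.cast_natCast, eval_natCast_multichoosePoly]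
  | negSucc m =>
    rw [dFac, if_neg (Int.negSucc_not_nonneg m).1, Int.neg_negSucc, pow_one,
      Int.toNat_natCast, coeff_one_sub_X_pow, Int.cast_negSucc, eval_neg_natCast_multichoosePoly]

lemma expand_dFac_one {t : ℕ} (ht : t ≠ 0) (k : ℤ) : expand t ht (dFac 1 k) = dFac t k := by
  have hinv : expand t ht (1 - X : ℚ⟦X⟧)⁻¹ = (1 - X ^ t : ℚ⟦X⟧)⁻¹ := by
    rw [eq_comm, PowerSeries.inv_eq_iff_mul_eq_one (by simp [ht])]
    calc expand t ht (1 - X)⁻¹ * (1 - X ^ t) = expand t ht ((1 - X : ℚ⟦X⟧)⁻¹ * (1 - X)) := by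
          rw [map_mul, map_sub, map_one, expand_X]
      _ = 1 := by rw [PowerSeries.inv_mul_cancel _ (by simp), map_one]
  unfold dFac
  split_ifs <;> simp [map_pow, hinv, expand_X]

lemma coeff_dFac {t : ℕ} (ht : t ≠ 0) (k : ℤ) (M : ℕ) :
    coeff M (dFac t k) = if t ∣ M then (multichoosePoly (M / t)).eval (k : ℚ) else 0 := by
  rw [← expand_dFac_one ht, coeff_expand, coeff_dFac_one]

/-- `(1 - q^t)^(-k)` with the exponent `k` as the polynomial variable. -/
def dFacSeries (t : ℕ) : ℚ[X]⟦X⟧ :=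
  PowerSeries.mk fun M => if t ∣ M then multichoosePoly (M / t) else 0

lemma coeff_dFacSeries (t M : ℕ) :
    coeff M (dFacSeries t) = if t ∣ M then multichoosePoly (M / t) else 0 :=
  coeff_mk _ _

lemma map_eval_dFacSeries {t : ℕ} (ht : t ≠ 0) (k : ℤ) :
    map (Polynomial.evalRingHom (k : ℚ)) (dFacSeries t) = dFac t k := by
  ext M
  rw [coeff_map, coeff_dFacSeries, coeff_dFac ht]
  split_ifs <;> simp

lemma coeff_nonneg_of_mem_lifts {p : ℚ[X]} (hp : p ∈ Polynomial.lifts NNRat.coeHom) (d : ℕ) :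
    0 ≤ p.coeff d := by
  obtain ⟨q, hq⟩ := (Polynomial.lifts_iff_coeff_lifts p).1 hp d
  rw [← hq]
  exact q.coe_nonneg

section prod

variable {ι : Type*} (s : Finset ι) (f : ι → ℕ)

lemma coeff_prod_dFacSeries (M : ℕ) :
    coeff M (∏ i ∈ s, dFacSeries (f i)) = ∑ l ∈ finsuppAntidiag s M,
      ∏ i ∈ s, if f i ∣ l i then multichoosePoly (l i / f i) else 0 := by
  simp only [coeff_prod, coeff_dFacSeries]

lemma coeff_prod_dFacSeries_mem_lifts (M : ℕ) :
    coeff M (∏ i ∈ s, dFacSeries (f i)) ∈ Polynomial.lifts NNRat.coeHom := by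
  rw [coeff_prod_dFacSeries]
  refine sum_mem fun l _ => prod_mem fun i _ => ?_
  split_ifs
  exacts [multichoosePoly_mem_lifts _, zero_mem _]

lemma natDegree_coeff_prod_dFacSeries_le (M : ℕ) :
    (coeff M (∏ i ∈ s, dFacSeries (f i))).natDegree ≤ M := by
  rw [coeff_prod_dFacSeries]
  refine Polynomial.natDegree_sum_le_of_forall_le _ _ fun l hl => ?_
  calc _ ≤ ∑ i ∈ s, (if f i ∣ l i then multichoosePoly (l i / f i) else 0).natDegree :=
        Polynomial.natDegree_prod_le _ _
    _ ≤ ∑ i ∈ s, l i := by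
        gcongr with i
        split_ifs
        · exact (natDegree_multichoosePoly _).trans_le (Nat.div_le_self _ _)
        · simp
    _ = M := (mem_finsuppAntidiag.1 hl).1

lemma coeff_coeff_prod_dFacSeries_self_pos {i₀ : ι} (hi₀ : i₀ ∈ s) (hf : f i₀ = 1) (N : ℕ) :
    0 < (coeff N (∏ i ∈ s, dFacSeries (f i))).coeff N := by
  rw [coeff_prod_dFacSeries, Polynomial.finsetSum_coeff]
  have hl₀ : Finsupp.single i₀ N ∈ finsuppAntidiag s N := by
    refine mem_finsuppAntidiag.2 ⟨?_, Finsupp.support_single_subset.trans (by simpa using hi₀)⟩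
    rw [sum_eq_single_of_mem i₀ hi₀ fun i _ hi => Finsupp.single_eq_of_ne hi,
      Finsupp.single_eq_same]
  have hterm : (∏ i ∈ s, if f i ∣ Finsupp.single i₀ N i then
      multichoosePoly (Finsupp.single i₀ N i / f i) else 0) = multichoosePoly N := by
    rw [prod_eq_single_of_mem i₀ hi₀ fun i _ hi => by simp [Finsupp.single_eq_of_ne hi]]
    simp [hf]
  refine lt_of_lt_of_le ?_ (single_le_sum (fun l _ => coeff_nonneg_of_mem_lifts
    (prod_mem fun i _ => ?_) N) hl₀)
  · rw [hterm, coeff_multichoosePoly_self]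
    positivity
  · split_ifs
    exacts [multichoosePoly_mem_lifts _, zero_mem _]

end prod

lemma mem_strictTuples {a N : ℕ} {f : Fin a → ℕ} :
    f ∈ strictTuples a N ↔ (∀ j, f j ∈ Icc 1 N) ∧ StrictMono f := by
  rw [strictTuples, mem_filter, Fintype.mem_piFinset]

lemma succ_le_of_strictMono {a : ℕ} {f : Fin a → ℕ} (hf : StrictMono f) (hpos : ∀ j, 0 < f j)
    (j : Fin a) : (j : ℕ) + 1 ≤ f j := by
  obtain ⟨j, hj⟩ := j
  induction j with
  | zero => exact hpos _
  | succ j ih =>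
    exact (ih (by omega)).trans_lt (hf (show (⟨j, by omega⟩ : Fin a) < ⟨j + 1, hj⟩ from
      Nat.lt_succ_self j))

def tupleWeight (r s : ℕ) {a : ℕ} (f : Fin a → ℕ) : ℕ := ∑ j, (r * f j ^ 2 + s * f j)

def minTuple (a : ℕ) : Fin a → ℕ := fun j => j + 1

section tupleWeight

variable {r s a N : ℕ}

lemma six_mul_sum_range (r s a : ℕ) :
    6 * ∑ j ∈ range a, (r * (j + 1) ^ 2 + s * (j + 1)) =
      a * (a + 1) * (r + 2 * a * r + 3 * s) := by
  induction a with
  | zero => simp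
  | succ a ih => rw [sum_range_succ, mul_add, ih]; ring

lemma tupleWeight_minTuple :
    tupleWeight r s (minTuple a) = a * (a + 1) * (r + 2 * a * r + 3 * s) / 6 := by
  simp only [tupleWeight, minTuple]
  rw [Fin.sum_univ_eq_sum_range (fun j => r * (j + 1) ^ 2 + s * (j + 1)) a,
    ← six_mul_sum_range, Nat.mul_div_cancel_left _ (by norm_num)]

lemma tupleWeight_minTuple_le {f : Fin a → ℕ} (hf : f ∈ strictTuples a N) :
    tupleWeight r s (minTuple a) ≤ tupleWeight r s f := by
  obtain ⟨hIcc, hmono⟩ := mem_strictTuples.1 hf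
  have hle := succ_le_of_strictMono hmono fun j => (mem_Icc.1 (hIcc j)).1
  exact sum_le_sum fun j _ => by gcongr <;> exact hle j

lemma le_tupleWeight (hs : 1 ≤ s) (f : Fin a → ℕ) (j : Fin a) : f j ≤ tupleWeight r s f :=
  calc f j ≤ r * f j ^ 2 + s * f j := le_add_left (Nat.le_mul_of_pos_left _ hs)
    _ ≤ tupleWeight r s f := single_le_sum (f := fun j => r * f j ^ 2 + s * f j)
        (fun _ _ => Nat.zero_le _) (mem_univ j)

lemma minTuple_mem_strictTuples (hs : 1 ≤ s) (hN : tupleWeight r s (minTuple a) ≤ N) :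
    minTuple a ∈ strictTuples a N := by
  refine mem_strictTuples.2 ⟨fun j => mem_Icc.2 ⟨Nat.le_add_left _ _, ?_⟩, ?_⟩
  · exact (le_tupleWeight hs _ j).trans hN
  · exact fun i j hij => Nat.succ_lt_succ hij

end tupleWeight

def Bpoly (a r s n : ℕ) : ℚ[X] :=
  ∑ f ∈ strictTuples a n, coeff n (X ^ tupleWeight r s f * ∏ j, dFacSeries (f j))

lemma Bcoeff_eq_eval_Bpoly (a r s n : ℕ) (k : ℤ) :
    Bcoeff a k r s n = (Bpoly a r s n).eval (k : ℚ) := by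
  rw [Bcoeff, Bpoly, Polynomial.eval_finsetSum]
  refine sum_congr rfl fun f hf => ?_
  have hpos : ∀ j, f j ≠ 0 := fun j =>
    Nat.one_le_iff_ne_zero.1 (mem_Icc.1 ((mem_strictTuples.1 hf).1 j)).1
  have hweight : r * ∑ j, f j ^ 2 + s * ∑ j, f j = tupleWeight r s f := by
    simp only [tupleWeight, sum_add_distrib, mul_sum]
  rw [hweight, ← Polynomial.coe_evalRingHom, ← coeff_map]
  simp [map_prod, map_eval_dFacSeries (hpos _)]

lemma natDegree_Bpoly_le (a r s n : ℕ) :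
    (Bpoly a r s n).natDegree ≤ n - tupleWeight r s (minTuple a) := by
  refine Polynomial.natDegree_sum_le_of_forall_le _ _ fun f hf => ?_
  rw [coeff_X_pow_mul']
  split_ifs
  · have hmin := tupleWeight_minTuple_le (r := r) (s := s) hf
    exact (natDegree_coeff_prod_dFacSeries_le _ _ _).trans (by omega)
  · simp

lemma coeff_Bpoly_pos {a r s n : ℕ} (ha : 1 ≤ a) (hs : 1 ≤ s)
    (hn : tupleWeight r s (minTuple a) ≤ n) :
    0 < (Bpoly a r s n).coeff (n - tupleWeight r s (minTuple a)) := by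
  rw [Bpoly, Polynomial.finsetSum_coeff]
  refine lt_of_lt_of_le ?_ (single_le_sum (fun f _ => ?_) (minTuple_mem_strictTuples hs hn))
  · rw [coeff_X_pow_mul', if_pos hn]
    exact coeff_coeff_prod_dFacSeries_self_pos _ _ (mem_univ ⟨0, ha⟩) rfl _
  · rw [coeff_X_pow_mul']
    split_ifs
    exacts [coeff_nonneg_of_mem_lifts (coeff_prod_dFacSeries_mem_lifts _ _ _) _, le_rfl]

theorem B_coeff_is_polynomial_in_k_general (a r s : ℕ) (ha : 1 ≤ a) (hs : 1 ≤ s)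
    (n : ℕ) (hn : a * (a + 1) * (r + 2 * a * r + 3 * s) / 6 ≤ n) :
    ∃ P : Polynomial ℚ,
      P.degree = ((n - a * (a + 1) * (r + 2 * a * r + 3 * s) / 6 : ℕ) : WithBot ℕ) ∧
      ∀ k : ℤ, Bcoeff a k r s n = P.eval (k : ℚ) := by
  rw [← tupleWeight_minTuple] at hn ⊢
  refine ⟨Bpoly a r s n, ?_, Bcoeff_eq_eval_Bpoly a r s n⟩
  exact Polynomial.degree_eq_of_le_of_coeff_ne_zero
    (Polynomial.degree_le_of_natDegree_le (natDegree_Bpoly_le a r s n))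
    (coeff_Bpoly_pos ha hs hn).ne'

/-- Corollary 1.4, `ℬ`-part.  For `a, r, s ∈ ℕ` (positive) and
`n ≥ a(a+1)(r+2ar+3s)/6`, there is a polynomial `𝒫_{a,r,s,n}` of degree exactly
`n - a(a+1)(r+2ar+3s)/6` such that `d_{a,k,r,s}(n) = 𝒫_{a,r,s,n}(k)` for every `k ∈ ℤ`. -/
theorem B_coeff_is_polynomial_in_k (a r s : ℕ) (ha : 1 ≤ a) (hr : 1 ≤ r) (hs : 1 ≤ s)
    (n : ℕ) (hn : a * (a + 1) * (r + 2 * a * r + 3 * s) / 6 ≤ n) :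
    ∃ P : Polynomial ℚ,
      P.degree = ((n - a * (a + 1) * (r + 2 * a * r + 3 * s) / 6 : ℕ) : WithBot ℕ) ∧
      ∀ k : ℤ, Bcoeff a k r s n = P.eval (k : ℚ) :=
  B_coeff_is_polynomial_in_k_general a r s ha hs n hn
end
end

section
/- Let k, r ∈ ℕ. In the ring ℚ⟦q⟧⟦X⟧ of formal power series, exp( Σ_{n≥1} (1/n) · 𝒜_{1,nk,nr}(q) · X^n ) = Σ_{j≥0} 𝒜*_{j,k,r}(q) · X^j, where 𝒜*_{0,k,r}(q) := 1; equivalently, 𝒜*_{a,k,r}(q) is the coefficient of X^a in exp( Σ_{n≥1} 𝒜_{1,nk,nr}(q) X^n / n ). -/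
open PowerSeries Finset
open scoped Classical

noncomputable section

/-- The coefficient `c_{a,k,r}(N)` of `q^N` in
`𝒜_{a,k,r}(q) = Σ_{1≤n₁<⋯<n_a} q^{r(n₁+⋯+n_a)} / ∏_j (1-q^{n_j})^k`.
Since `r ≥ 1`, tuples containing an entry `> N` contribute `0` to the coefficient of `q^N`,
so the (q-adically convergent) infinite sum can be truncated to entries in `[1, N]`. -/
def Acoeff (a : ℕ) (k : ℤ) (r : ℕ) (N : ℕ) : ℚ :=
  ∑ f ∈ strictTuples a N,
    PowerSeries.coeff N ((X : PowerSeries ℚ) ^ (r * ∑ j, f j) * ∏ j, dFac (f j) k)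

/-- The exponential of a power series `f ∈ ℚ⟦q⟧⟦X⟧` with zero constant term (in `X`):
`exp f = Σ_{m≥0} f^m / m!`.  Since `f` has no constant term, `f^m` has `X`-order at least
`m`, so the coefficient of `X^j` only involves `f^m` for `m ≤ j`. -/
def expX (f : PowerSeries (PowerSeries ℚ)) : PowerSeries (PowerSeries ℚ) :=
  PowerSeries.mk fun j => ∑ m ∈ Finset.range (j + 1),
    ((m.factorial : ℚ)⁻¹) • (PowerSeries.coeff j (f ^ m))

/-- Weakly increasing `a`-tuples `1 ≤ n₁ ≤ n₂ ≤ ⋯ ≤ n_a ≤ N`. -/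
def monoTuples (a N : ℕ) : Finset (Fin a → ℕ) :=
  (Fintype.piFinset fun _ : Fin a => Finset.Icc 1 N).filter fun f => Monotone f

/-- The coefficient of `q^N` in the weak-inequality analogue
`𝒜*_{a,k,r}(q) = Σ_{1≤n₁≤⋯≤n_a} q^{r(n₁+⋯+n_a)} / ∏_j (1-q^{n_j})^k`. -/
def AstarCoeff (a : ℕ) (k : ℤ) (r : ℕ) (N : ℕ) : ℚ :=
  ∑ f ∈ monoTuples a N,
    PowerSeries.coeff N ((X : PowerSeries ℚ) ^ (r * ∑ j, f j) * ∏ j, dFac (f j) k)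

/-- The power series `𝒜_{a,k,r}(q) ∈ ℚ⟦q⟧`; note `𝒜_{0,k,r} = 1`. -/
def Aser (a : ℕ) (k : ℤ) (r : ℕ) : PowerSeries ℚ := PowerSeries.mk (Acoeff a k r)

/-- The power series `𝒜*_{a,k,r}(q) ∈ ℚ⟦q⟧`; note `𝒜*_{0,k,r} = 1` and
`𝒜*_{1,k,r} = 𝒜_{1,k,r}`. -/
def AstarSer (a : ℕ) (k : ℤ) (r : ℕ) : PowerSeries ℚ := PowerSeries.mk (AstarCoeff a k r)


/-! Modulo `q^{N+1}` only the indices `m ≤ N` matter, since `u_m = q^{rm} / (1 - q^m)^k` is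
divisible by `q^m`. There the series inside the exponential is `Σ_{m ≤ N} -log (1 - u_m X)`, so
its exponential is `∏_{m ≤ N} 1 / (1 - u_m X)`, whose coefficient of `X^j` is the complete
homogeneous sum `Σ_{m₁ ≤ ⋯ ≤ m_j} u_{m₁} ⋯ u_{m_j}`, which is `𝒜*_{j,k,r}` modulo `q^{N+1}`.
The exponential laws needed are proved from `(exp ∘ f)' = f' · exp ∘ f`: a solution of
`h' = g h` is determined by its constant term. -/

open scoped Nat

/-- A weakly increasing tuple is determined by the multiplicities of its values. -/
theorem sum_monoTuples_eq_sum_finsuppAntidiag {M : Type*} [AddCommMonoid M]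
    (F : (ℕ →₀ ℕ) → M) (j N : ℕ) :
    ∑ f ∈ monoTuples j N, F (Multiset.toFinsupp (List.ofFn f)) =
      ∑ l ∈ finsuppAntidiag (Icc 1 N) j, F l := by
  refine sum_nbij (fun f => Multiset.toFinsupp (List.ofFn f)) ?_ ?_ ?_ fun _ _ => rfl
  · intro f hf
    rw [monoTuples, mem_filter, Fintype.mem_piFinset] at hf
    rw [mem_finsuppAntidiag', Multiset.toFinsupp_support]
    refine ⟨?_, fun m hm => ?_⟩
    · have := Finsupp.card_toMultiset (Multiset.toFinsupp (List.ofFn f : Multiset ℕ))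
      rw [Multiset.toFinsupp_toMultiset, Multiset.coe_card, List.length_ofFn] at this
      exact this.symm
    obtain ⟨i, rfl⟩ := List.mem_ofFn.1 (Multiset.mem_toFinset.1 hm)
    exact hf.1 i
  · intro f hf g hg hfg
    rw [mem_coe, monoTuples, mem_filter] at hf hg
    refine List.ofFn_injective (List.Perm.eq_of_sortedLE ?_ ?_ ?_)
    · exact hf.2.sortedLE_ofFn
    · exact hg.2.sortedLE_ofFn
    · exact Multiset.coe_eq_coe.1 (Multiset.toFinsupp.injective hfg)
  · intro l hl
    rw [mem_coe, mem_finsuppAntidiag'] at hl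
    set L := (Finsupp.toMultiset l).sort (· ≤ ·)
    have hlen : L.length = j := by rw [Multiset.length_sort, Finsupp.card_toMultiset]; exact hl.1
    set f : Fin j → ℕ := fun i => L.get (i.cast hlen.symm)
    have hf : List.ofFn f = L :=
      List.ext_get (by rw [List.length_ofFn, hlen]) fun _ _ _ => by simp [f]
    refine ⟨f, ?_, by dsimp only; rw [hf, Multiset.sort_eq, Finsupp.toMultiset_toFinsupp]⟩
    have hsorted : (List.ofFn f).SortedLE := hf ▸ (Multiset.pairwise_sort _ _).sortedLE
    rw [mem_coe, monoTuples, mem_filter, Fintype.mem_piFinset]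
    refine ⟨fun i => hl.2 ?_, hsorted.monotone⟩
    rw [← Finsupp.mem_toMultiset, ← Multiset.mem_sort (· ≤ ·)]
    exact List.get_mem _ _

namespace PowerSeries

section CommSemiring

variable {R : Type*} [CommSemiring R]

theorem coeff_pow_eq_zero_of_lt {f : R⟦X⟧} (hf : constantCoeff f = 0) {j m : ℕ} (h : j < m) :
    coeff j (f ^ m) = 0 :=
  X_pow_dvd_iff.mp (pow_dvd_pow_of_dvd (X_dvd_iff.mpr hf) m) j h

def geom (c : R) : R⟦X⟧ := mk fun n => c ^ n

theorem derivative_geom (c : R) : d⁄dX R (geom c) = C c * geom c ^ 2 := by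
  ext n
  have hsq : coeff n (geom c ^ 2) = (n + 1 : ℕ) • c ^ n := by
    rw [sq, coeff_mul, ← Nat.card_antidiagonal n, ← sum_const]
    refine sum_congr rfl fun p hp => ?_
    rw [geom, coeff_mk, coeff_mk, ← pow_add, mem_antidiagonal.1 hp]
  rw [coeff_derivative, coeff_C_mul, hsq, geom, coeff_mk, nsmul_eq_mul, pow_succ']
  push_cast
  ring

theorem coeff_prod_geom (v : ℕ → R) (j N : ℕ) :
    coeff j (∏ m ∈ Icc 1 N, geom (v m)) = ∑ f ∈ monoTuples j N, ∏ i, v (f i) := by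
  rw [coeff_prod, ← sum_monoTuples_eq_sum_finsuppAntidiag]
  refine sum_congr rfl fun f hf => ?_
  rw [monoTuples, mem_filter, Fintype.mem_piFinset] at hf
  have hsupp : (List.ofFn f : Multiset ℕ).toFinset ⊆ Icc 1 N := fun m hm => by
    obtain ⟨i, rfl⟩ := List.mem_ofFn.1 (Multiset.mem_toFinset.1 hm)
    exact hf.1 i
  simp only [geom, coeff_mk, Multiset.toFinsupp_apply]
  rw [← prod_subset hsupp fun m _ hm => by
      rw [Multiset.count_eq_zero_of_notMem (by simpa using hm), pow_zero],
    ← prod_multiset_map_count, Multiset.map_coe, Multiset.prod_coe, ← List.ofFn_comp',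
    List.prod_ofFn]

end CommSemiring

section CommRing

variable {R : Type*} [CommRing R]

theorem mk_span_X_pow_eq_iff {N : ℕ} {a b : R⟦X⟧} :
    Ideal.Quotient.mk (Ideal.span {X ^ (N + 1)}) a = Ideal.Quotient.mk _ b ↔
      ∀ n ≤ N, coeff n a = coeff n b := by
  simp only [Ideal.Quotient.eq, Ideal.mem_span_singleton, X_pow_dvd_iff, map_sub, sub_eq_zero,
    Nat.lt_succ_iff]

theorem eq_of_derivative_eq_mul [IsAddTorsionFree R] {g h₁ h₂ : R⟦X⟧}
    (hd₁ : d⁄dX R h₁ = g * h₁) (hd₂ : d⁄dX R h₂ = g * h₂)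
    (h₀ : constantCoeff h₁ = constantCoeff h₂) : h₁ = h₂ := by
  rw [← sub_eq_zero]
  set h := h₁ - h₂
  have hd : d⁄dX R h = g * h := by rw [map_sub, hd₁, hd₂, mul_sub]
  ext n
  rw [map_zero]
  induction n using Nat.strong_induction_on with
  | _ n ih =>
    rcases n with _ | n
    · simp [h, h₀]
    · have : coeff n (g * h) = 0 := by
        rw [coeff_mul]
        refine Finset.sum_eq_zero fun p hp => ?_
        rw [ih p.2 (by have := mem_antidiagonal.1 hp; omega), mul_zero]
      rw [← hd, coeff_derivative, mul_comm, ← Nat.cast_succ, ← nsmul_eq_mul,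
        nsmul_eq_zero_iff] at this
      exact this.resolve_right n.succ_ne_zero


end CommRing

section ExpComp

variable {A : Type*} [CommRing A] [Algebra ℚ A]

/-- `exp ∘ f = Σ_{m ≥ 0} fᵐ / m!`. The coefficient of `Xʲ` only sums over `m ≤ j`, which is the
true value of `exp ∘ f` only when `f` has no constant term. -/
def expComp (f : A⟦X⟧) : A⟦X⟧ :=
  mk fun j => ∑ m ∈ range (j + 1), ((m ! : ℚ)⁻¹) • coeff j (f ^ m)

theorem coeff_expComp {f : A⟦X⟧} (hf : constantCoeff f = 0) {j M : ℕ} (h : j < M) :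
    coeff j (expComp f) = ∑ m ∈ range M, ((m ! : ℚ)⁻¹) • coeff j (f ^ m) := by
  rw [expComp, coeff_mk]
  refine sum_subset (range_subset_range.mpr h) fun m _ hm => ?_
  rw [coeff_pow_eq_zero_of_lt hf (by simpa using hm), smul_zero]

theorem constantCoeff_expComp (f : A⟦X⟧) : constantCoeff (expComp f) = 1 := by
  rw [← coeff_zero_eq_constantCoeff_apply, expComp, coeff_mk]
  simp

theorem derivative_expComp {f : A⟦X⟧} (hf : constantCoeff f = 0) :
    d⁄dX A (expComp f) = d⁄dX A f * expComp f := by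
  ext n
  have hfac (m : ℕ) : ((m + 1)! : ℚ)⁻¹ * (m + 1 : ℕ) = (m ! : ℚ)⁻¹ := by
    rw [Nat.factorial_succ]
    push_cast
    field_simp
  calc coeff n (d⁄dX A (expComp f))
      = ∑ m ∈ range (n + 1), ((m ! : ℚ)⁻¹) • coeff n (d⁄dX A f * f ^ m) := by
        rw [coeff_derivative, coeff_expComp hf (Nat.lt_succ_self (n + 1)), sum_range_succ',
          pow_zero, coeff_one, if_neg n.succ_ne_zero, smul_zero, add_zero, sum_mul]
        refine sum_congr rfl fun m _ => ?_
        rw [smul_mul_assoc, ← coeff_derivative, derivative_pow, Nat.add_sub_cancel,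
          mul_assoc, mul_comm (f ^ m), ← nsmul_eq_mul, map_nsmul, ← Nat.cast_smul_eq_nsmul ℚ,
          smul_smul, hfac]
    _ = coeff n (d⁄dX A f * expComp f) := by
        simp only [coeff_mul, smul_sum]
        rw [sum_comm]
        refine sum_congr rfl fun p hp => ?_
        rw [coeff_expComp hf (by have := mem_antidiagonal.1 hp; omega : p.2 < n + 1), mul_sum]
        exact sum_congr rfl fun m _ => (mul_smul_comm _ _ _).symm

theorem expComp_add {f g : A⟦X⟧} (hf : constantCoeff f = 0) (hg : constantCoeff g = 0) :
    expComp (f + g) = expComp f * expComp g := by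
  have : IsAddTorsionFree A := .of_module_rat A
  refine eq_of_derivative_eq_mul (derivative_expComp (by rw [map_add, hf, hg, add_zero])) ?_ ?_
  · rw [Derivation.leibniz, derivative_expComp hf, derivative_expComp hg, smul_eq_mul,
      smul_eq_mul, map_add]
    ring
  · rw [map_mul, constantCoeff_expComp, constantCoeff_expComp, constantCoeff_expComp, mul_one]

theorem expComp_zero : expComp (0 : A⟦X⟧) = 1 := by
  have : IsAddTorsionFree A := .of_module_rat A
  refine eq_of_derivative_eq_mul (derivative_expComp (map_zero _)) ?_ ?_
  · rw [derivative_one, map_zero, zero_mul]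
  · rw [constantCoeff_expComp, map_one]

theorem expComp_sum {ι : Type*} (s : Finset ι) (f : ι → A⟦X⟧)
    (hf : ∀ i ∈ s, constantCoeff (f i) = 0) :
    expComp (∑ i ∈ s, f i) = ∏ i ∈ s, expComp (f i) := by
  induction s using Finset.cons_induction with
  | empty => rw [sum_empty, prod_empty, expComp_zero]
  | cons a s ha ih =>
    have hs : ∀ i ∈ s, constantCoeff (f i) = 0 := fun i hi => hf i (mem_cons_of_mem hi)
    rw [sum_cons, prod_cons, expComp_add (hf a (mem_cons_self a s)) ?_, ih hs]
    rw [map_sum]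
    exact sum_eq_zero hs

theorem map_expComp {B : Type*} [CommRing B] [Algebra ℚ B] (ψ : A →+* B) (f : A⟦X⟧) :
    map ψ (expComp f) = expComp (map ψ f) := by
  ext j
  simp only [expComp, coeff_map, coeff_mk, map_sum, ← map_pow]
  exact sum_congr rfl fun m _ => map_rat_smul ψ _ _

/-- `-log (1 - c X)` -/
def negLogOneSub (c : A) : A⟦X⟧ := mk fun n => if n = 0 then 0 else ((n : ℚ)⁻¹) • c ^ n

theorem constantCoeff_negLogOneSub (c : A) : constantCoeff (negLogOneSub c) = 0 := by
  rw [← coeff_zero_eq_constantCoeff_apply, negLogOneSub, coeff_mk, if_pos rfl]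

theorem derivative_negLogOneSub (c : A) : d⁄dX A (negLogOneSub c) = C c * geom c := by
  ext n
  rw [coeff_derivative, negLogOneSub, coeff_mk, if_neg n.succ_ne_zero, coeff_C_mul, geom,
    coeff_mk, Algebra.smul_def, mul_right_comm, ← pow_succ', ← Nat.cast_succ,
    ← map_natCast (algebraMap ℚ A), ← map_mul, inv_mul_cancel₀ (by positivity), map_one, one_mul]

theorem expComp_negLogOneSub (c : A) : expComp (negLogOneSub c) = geom c := by
  have : IsAddTorsionFree A := .of_module_rat A
  refine eq_of_derivative_eq_mul (derivative_expComp (constantCoeff_negLogOneSub c)) ?_ ?_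
  · rw [derivative_negLogOneSub, derivative_geom, mul_assoc, sq]
  · rw [constantCoeff_expComp, ← coeff_zero_eq_constantCoeff_apply, geom, coeff_mk, pow_zero]

end ExpComp

end PowerSeries

/-- The summand `q^{rm} / (1 - q^m)^k` of `𝒜_{1,k,r}`. -/
def qTerm (k r m : ℕ) : ℚ⟦X⟧ := X ^ (r * m) * dFac m k

theorem qTerm_pow (k r m n : ℕ) :
    qTerm k r m ^ n = X ^ (n * r * m) * dFac m ((n * k : ℕ) : ℤ) := by
  rw [qTerm, mul_pow, ← pow_mul, dFac, dFac, if_pos (by positivity), if_pos (by positivity),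
    ← pow_mul, Int.toNat_natCast, Int.toNat_natCast]
  ring_nf

theorem X_pow_dvd_qTerm (k : ℕ) {r : ℕ} (hr : 1 ≤ r) (m : ℕ) : (X : ℚ⟦X⟧) ^ m ∣ qTerm k r m :=
  (pow_dvd_pow X (Nat.le_mul_of_pos_left m hr)).mul_right _

theorem prod_qTerm (k r : ℕ) {j : ℕ} (f : Fin j → ℕ) :
    ∏ i, qTerm k r (f i) = X ^ (r * ∑ i, f i) * ∏ i, dFac (f i) k := by
  simp only [qTerm, prod_mul_distrib, prod_pow_eq_pow_sum, mul_sum]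

theorem Acoeff_one (k : ℤ) (r N : ℕ) :
    Acoeff 1 k r N = ∑ m ∈ Icc 1 N, coeff N ((X : ℚ⟦X⟧) ^ (r * m) * dFac m k) := by
  rw [Acoeff]
  refine sum_nbij' (fun f => f 0) (fun m _ => m) (fun f hf => ?_) (fun m hm => ?_)
    (fun f _ => funext fun i => by rw [Subsingleton.elim i 0]) (fun _ _ => rfl)
    (fun f _ => by rw [Fin.sum_univ_one, Fin.prod_univ_one])
  · exact Fintype.mem_piFinset.1 (mem_filter.1 hf).1 0
  · exact mem_filter.2 ⟨Fintype.mem_piFinset.2 fun _ => hm, Subsingleton.strictMono _⟩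

theorem monoTuples_mono {j N' N : ℕ} (h : N' ≤ N) : monoTuples j N' ⊆ monoTuples j N :=
  filter_subset_filter _ (Fintype.piFinset_subset _ _ fun _ => Icc_subset_Icc_right h)

theorem mk_Aser_one (k : ℕ) {r n : ℕ} (hr : 1 ≤ r) (hn : n ≠ 0) (N : ℕ) :
    Ideal.Quotient.mk (Ideal.span {X ^ (N + 1)}) (Aser 1 ((n * k : ℕ) : ℤ) (n * r)) =
      Ideal.Quotient.mk _ (∑ m ∈ Icc 1 N, qTerm k r m ^ n) := by
  refine mk_span_X_pow_eq_iff.2 fun N' hN' => ?_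
  rw [Aser, coeff_mk, Acoeff_one, map_sum]
  simp only [← qTerm_pow]
  refine sum_subset (Icc_subset_Icc_right hN') fun m hm hm' => ?_
  simp only [mem_Icc, not_and, not_le] at hm hm'
  exact X_pow_dvd_iff.1 ((X_pow_dvd_qTerm k hr m).trans (dvd_pow_self _ hn)) N' (hm' hm.1)

theorem mk_AstarSer (k : ℕ) {r : ℕ} (hr : 1 ≤ r) (j N : ℕ) :
    Ideal.Quotient.mk (Ideal.span {X ^ (N + 1)}) (AstarSer j k r) =
      Ideal.Quotient.mk _ (∑ f ∈ monoTuples j N, ∏ i, qTerm k r (f i)) := by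
  refine mk_span_X_pow_eq_iff.2 fun N' hN' => ?_
  rw [AstarSer, coeff_mk, AstarCoeff, map_sum]
  simp only [← prod_qTerm]
  refine sum_subset (monoTuples_mono hN') fun f hf hf' => ?_
  obtain ⟨i, hi⟩ : ∃ i, N' < f i := by
    by_contra! hle
    rw [monoTuples, mem_filter, Fintype.mem_piFinset] at hf hf'
    exact hf' ⟨fun i => mem_Icc.2 ⟨(mem_Icc.1 (hf.1 i)).1, hle i⟩, hf.2⟩
  have hdvd := (X_pow_dvd_qTerm k hr (f i)).trans
    (dvd_prod_of_mem (fun i => qTerm k r (f i)) (mem_univ i))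
  exact X_pow_dvd_iff.1 hdvd N' hi

theorem Astar_exp_identity_general (k r : ℕ) (hr : 1 ≤ r) :
    expX (PowerSeries.mk fun n =>
        if n = 0 then 0 else ((1 : ℚ) / n) • Aser 1 ((n * k : ℕ) : ℤ) (n * r)) =
      PowerSeries.mk (fun j => AstarSer j (k : ℤ) r) := by
  set E : ℚ⟦X⟧⟦X⟧ := PowerSeries.mk fun n =>
    if n = 0 then 0 else ((1 : ℚ) / n) • Aser 1 ((n * k : ℕ) : ℤ) (n * r)
  ext j N
  rw [coeff_mk]
  set I := Ideal.span {(X : ℚ⟦X⟧) ^ (N + 1)}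
  set π := Ideal.Quotient.mk I
  have hE : map π E = map π (∑ m ∈ Icc 1 N, negLogOneSub (qTerm k r m)) := by
    ext n
    rcases eq_or_ne n 0 with rfl | hn
    · simp [E, negLogOneSub]
    · rw [coeff_map, coeff_mk, if_neg hn, map_rat_smul, mk_Aser_one k hr hn N]
      simp [π, I, negLogOneSub, hn, smul_sum, map_rat_smul]
  have hexp : π (coeff j (expX E)) = π (∑ f ∈ monoTuples j N, ∏ i, qTerm k r (f i)) := by
    simp_rw [← coeff_prod_geom, ← expComp_negLogOneSub]
    rw [← expComp_sum _ _ fun m _ => constantCoeff_negLogOneSub _, ← coeff_map, ← coeff_map,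
      show expX E = expComp E from rfl, map_expComp, map_expComp, hE]
  exact mk_span_X_pow_eq_iff.1 (hexp.trans (mk_AstarSer k hr j N).symm) N le_rfl

/-- equation (5.1): the quasi-shuffle exponential identity for `𝒜*`.
For `k, r ∈ ℕ` (positive), in `ℚ⟦q⟧⟦X⟧`:
`exp(Σ_{n≥1} (1/n) 𝒜_{1,nk,nr}(q) Xⁿ) = Σ_{j≥0} 𝒜*_{j,k,r}(q) X^j` (with `𝒜*_{0,k,r} = 1`);
equivalently, `𝒜*_{a,k,r}(q)` is the coefficient of `X^a` in the left-hand side. -/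
theorem Astar_exp_identity (k r : ℕ) (hk : 1 ≤ k) (hr : 1 ≤ r) :
    expX (PowerSeries.mk fun n =>
        if n = 0 then 0 else ((1 : ℚ) / n) • Aser 1 ((n * k : ℕ) : ℤ) (n * r)) =
      PowerSeries.mk (fun j => AstarSer j (k : ℤ) r) :=
  Astar_exp_identity_general k r hr
end
end
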